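/- Let Q be the uniform probability measure on GI ∪ HI, where G = (−√3/2, 0), H = (√3/2, 0), I = (0, 1/2), with density 1/2 per unit arc length (each of GI, HI has length 1). Among sets γ = {G, H, I, (a, 0)} with −√3/2 < a < −1/(2√3), the distortion error ∫ min_{p∈γ} ‖x − p‖² dQ(x) is minimized at a = −1/2, and the minimum value equals (5 − 2√3)/24. -/

import Mathlib

open Real MeasureTheory intervalIntegral

noncomputable section

/-- Squared Euclidean distance in the plane. -/
def sqDist (p q : ℝ × ℝ) : ℝ := (p.1 - q.1) ^ 2 + (p.2 - q.2) ^ 2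

/-- Distortion error for the uniform measure `Q` on `GI ∪ HI` (density `1/2` per unit arc
length, each of `GI`, `HI` of length `1`) of the set `{G, H, I, (a, 0)}`, where
`G = (−√3/2, 0)`, `H = (√3/2, 0)`, `I = (0, 1/2)`. -/
def D (a : ℝ) : ℝ :=
  (1 / 2 : ℝ) *
    ((∫ t in (0 : ℝ)..1,
        sInf ((fun p => sqDist (-(Real.sqrt 3 * t) / 2, (1 - t) / 2) p) ''
          ({(-(Real.sqrt 3 / 2), 0), (Real.sqrt 3 / 2, 0), (0, 1 / 2), (a, 0)} : Set (ℝ × ℝ)))) +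
      (∫ t in (0 : ℝ)..1,
        sInf ((fun p => sqDist (Real.sqrt 3 * (1 - t) / 2, t / 2) p) ''
          ({(-(Real.sqrt 3 / 2), 0), (Real.sqrt 3 / 2, 0), (0, 1 / 2), (a, 0)} : Set (ℝ × ℝ)))))

lemma sInf4 (x y z w : ℝ) : sInf ({x, y, z, w} : Set ℝ) = min x (min y (min z w)) := by
  have h : ({x, y, z, w} : Set ℝ) = insert x (insert y (insert z {w})) := rfl
  rw [h, csInf_insert (Set.toFinite _).bddBelow (Set.insert_nonempty _ _),
      csInf_insert (Set.toFinite _).bddBelow (Set.insert_nonempty _ _),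
      csInf_insert (Set.toFinite _).bddBelow (Set.singleton_nonempty _),
      csInf_singleton]

lemma integ_quad (p q r u v : ℝ) :
    ∫ t in u..v, (p * t ^ 2 + q * t + r) =
      p * (v ^ 3 - u ^ 3) / 3 + q * (v ^ 2 - u ^ 2) / 2 + r * (v - u) := by
  have h1 : IntervalIntegrable (fun t : ℝ => p * t ^ 2) volume u v :=
    (Continuous.mul continuous_const (continuous_pow 2)).intervalIntegrable _ _
  have h2 : IntervalIntegrable (fun t : ℝ => q * t) volume u v :=
    (continuous_const.mul continuous_id).intervalIntegrable _ _
  have h3 : IntervalIntegrable (fun t : ℝ => r) volume u v := intervalIntegrable_const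
  rw [intervalIntegral.integral_add (h1.add h2) h3, intervalIntegral.integral_add h1 h2,
      intervalIntegral.integral_const_mul, intervalIntegral.integral_const_mul,
      integral_pow, integral_id, intervalIntegral.integral_const, smul_eq_mul]
  push_cast
  ring


def mHI (s a t : ℝ) : ℝ :=
  min (t^2 - 3*t + 3) (min (t^2) (min ((1-t)^2) (t^2 - (3/2)*t + 3/4 - s*a + s*a*t + a^2)))

def mGI (s a t : ℝ) : ℝ :=
  min ((1-t)^2) (min (t^2 + t + 1) (min (t^2) (t^2 + (s*a - 1/2)*t + (a^2 + 1/4))))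

lemma contHI (s a : ℝ) : Continuous (mHI s a) := by unfold mHI; continuity

lemma contGI (s a : ℝ) : Continuous (mGI s a) := by unfold mGI; continuity

lemma hHI_val (s a : ℝ) (hs0 : 0 < s) (ha : a < 0) :
    (∫ t in (0:ℝ)..1, mHI s a t) = 1/12 := by
  have i1 : IntervalIntegrable (mHI s a) volume 0 (1/2) := (contHI s a).intervalIntegrable _ _
  have i2 : IntervalIntegrable (mHI s a) volume (1/2) 1 := (contHI s a).intervalIntegrable _ _
  rw [← integral_add_adjacent_intervals i1 i2]
  have e1 : (∫ t in (0:ℝ)..(1/2), mHI s a t) = ∫ t in (0:ℝ)..(1/2), (1*t^2 + 0*t + 0) := by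
    apply intervalIntegral.integral_congr
    intro t ht
    rw [Set.uIcc_of_le (by norm_num)] at ht
    obtain ⟨ht0, ht1⟩ := ht
    have hsa : 0 ≤ s * a * (t - 1) := by
      have : 0 ≤ s * (-a) * (1 - t) := mul_nonneg (mul_nonneg hs0.le (by linarith)) (by linarith)
      nlinarith
    have hA : t^2 ≤ t^2 - 3*t + 3 := by nlinarith
    have hB : t^2 ≤ (1-t)^2 := by nlinarith
    have hC : t^2 ≤ t^2 - (3/2)*t + 3/4 - s*a + s*a*t + a^2 := by nlinarith
    unfold mHI
    rw [min_eq_left (le_min hB hC), min_eq_right hA]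
    ring
  have e2 : (∫ t in (1/2:ℝ)..1, mHI s a t) = ∫ t in (1/2:ℝ)..1, (1*t^2 + (-2)*t + 1) := by
    apply intervalIntegral.integral_congr
    intro t ht
    rw [Set.uIcc_of_le (by norm_num)] at ht
    obtain ⟨ht0, ht1⟩ := ht
    have hsa : 0 ≤ s * a * (t - 1) := by
      have : 0 ≤ s * (-a) * (1 - t) := mul_nonneg (mul_nonneg hs0.le (by linarith)) (by linarith)
      nlinarith
    have hA : (1-t)^2 ≤ t^2 - 3*t + 3 := by nlinarith
    have hB : (1-t)^2 ≤ t^2 := by nlinarith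
    have hC : (1-t)^2 ≤ t^2 - (3/2)*t + 3/4 - s*a + s*a*t + a^2 := by nlinarith
    unfold mHI
    rw [min_eq_left hC, min_eq_right hB, min_eq_right hA]
    ring
  rw [e1, e2, integ_quad, integ_quad]
  norm_num

set_option maxHeartbeats 2000000 in
lemma hGI_val (s a : ℝ) (hs2 : s^2 = 3) (hs0 : 0 < s) (ha1 : -(s/2) < a) (ha2 : a < 0) :
    (∫ t in (0:ℝ)..1, mGI s a t) = 1/12 + a^2/3 - (4*a^2/3)/(1 - 2*s*a) := by
  have hs1 : 1 < s := by nlinarith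
  have hslt2 : s < 2 := by nlinarith
  have hden : 0 < 1/2 - s*a := by nlinarith
  have hden2 : 0 < 1 - 2*s*a := by nlinarith
  obtain ⟨T1, hT1⟩ : ∃ x : ℝ, x = 1/2 - s*a/3 := ⟨_, rfl⟩
  obtain ⟨T2, hT2⟩ : ∃ x : ℝ, x = (a^2 + 1/4)/(1/2 - s*a) := ⟨_, rfl⟩
  have key : (1/2 - s*a) * T2 = a^2 + 1/4 := by
    rw [hT2, mul_comm, div_mul_cancel₀ _ hden.ne']
  have hT2pos : 0 < T2 := by rw [hT2]; exact div_pos (by nlinarith) hden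
  have hT2half : T2 < 1/2 := by
    rw [hT2, div_lt_iff₀ hden]; nlinarith
  have hT1half : (1/2:ℝ) ≤ T1 := by rw [hT1]; nlinarith
  have hT1one : T1 ≤ 1 := by rw [hT1]; nlinarith
  have hT2T1 : T2 ≤ T1 := le_trans (le_of_lt hT2half) hT1half
  have i1 : IntervalIntegrable (mGI s a) volume 0 T2 := (contGI s a).intervalIntegrable _ _
  have i2 : IntervalIntegrable (mGI s a) volume T2 T1 := (contGI s a).intervalIntegrable _ _
  have i3 : IntervalIntegrable (mGI s a) volume T1 1 := (contGI s a).intervalIntegrable _ _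
  rw [← integral_add_adjacent_intervals i1 (i2.trans i3), ← integral_add_adjacent_intervals i2 i3]
  have h32 : (0:ℝ) < 3/2 + s*a := by nlinarith
  have haux : (3/2 + s*a) * T1 = 3/4 - a^2 := by
    rw [hT1]; linear_combination (-(a^2)/3)*hs2
  have e1 : (∫ t in (0:ℝ)..T2, mGI s a t) = ∫ t in (0:ℝ)..T2, (1*t^2 + 0*t + 0) := by
    apply intervalIntegral.integral_congr
    intro t ht
    rw [Set.uIcc_of_le hT2pos.le] at ht
    obtain ⟨ht0, ht1⟩ := ht
    have hm : (1/2 - s*a) * t ≤ (1/2 - s*a) * T2 := by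
      exact mul_le_mul_of_nonneg_left ht1 hden.le
    have hq : t^2 ≤ t^2 + (s*a - 1/2)*t + (a^2 + 1/4) := by linarith [key, hm]
    have hB : t^2 ≤ t^2 + t + 1 := by nlinarith
    have hA : t^2 ≤ (1-t)^2 := by nlinarith
    unfold mGI
    rw [min_eq_left hq, min_eq_right hB, min_eq_right hA]
    ring
  have e2 : (∫ t in T2..T1, mGI s a t)
      = ∫ t in T2..T1, (1*t^2 + (s*a - 1/2)*t + (a^2 + 1/4)) := by
    apply intervalIntegral.integral_congr
    intro t ht
    rw [Set.uIcc_of_le hT2T1] at ht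
    obtain ⟨ht0, ht1⟩ := ht
    have ht0' : 0 ≤ t := le_trans hT2pos.le ht0
    have hm : (1/2 - s*a) * T2 ≤ (1/2 - s*a) * t := mul_le_mul_of_nonneg_left ht0 hden.le
    have hm' : (3/2 + s*a) * t ≤ (3/2 + s*a) * T1 := mul_le_mul_of_nonneg_left ht1 h32.le
    have hq1 : t^2 + (s*a - 1/2)*t + (a^2 + 1/4) ≤ t^2 := by linarith [key, hm]
    have hq2 : t^2 + (s*a - 1/2)*t + (a^2 + 1/4) ≤ (1-t)^2 := by linarith [haux, hm']
    have hq3 : t^2 + (s*a - 1/2)*t + (a^2 + 1/4) ≤ t^2 + t + 1 := by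
      have hsa : 0 < s * (-a) := mul_pos hs0 (by linarith)
      have ha34 : a^2 < 3/4 := by
        nlinarith [mul_pos (show (0:ℝ) < s/2 + a by linarith) (show (0:ℝ) < s/2 - a by linarith)]
      linarith [mul_nonneg (show (0:ℝ) ≤ 3/2 - s*a by nlinarith) ht0', ha34]
    unfold mGI
    rw [min_eq_right hq1, min_eq_right hq3, min_eq_right hq2]
    ring
  have e3 : (∫ t in T1..(1:ℝ), mGI s a t) = ∫ t in T1..(1:ℝ), (1*t^2 + (-2)*t + 1) := by
    apply intervalIntegral.integral_congr
    intro t ht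
    rw [Set.uIcc_of_le hT1one] at ht
    obtain ⟨ht0, ht1⟩ := ht
    have hthalf : (1/2:ℝ) ≤ t := le_trans hT1half ht0
    have hm' : (3/2 + s*a) * T1 ≤ (3/2 + s*a) * t := mul_le_mul_of_nonneg_left ht0 h32.le
    have h1 : (1-t)^2 ≤ t^2 + t + 1 := by nlinarith
    have h2 : (1-t)^2 ≤ t^2 := by nlinarith
    have h3 : (1-t)^2 ≤ t^2 + (s*a - 1/2)*t + (a^2 + 1/4) := by linarith [haux, hm']
    unfold mGI
    rw [min_eq_left (le_min h1 (le_min h2 h3))]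
    ring
  rw [e1, e2, e3, integ_quad, integ_quad, integ_quad]
  have h7 : (1/2 - s*a)*(T1 - T2) = -(2*s*a/3) := by
    have e : (1/2 - s*a)*T1 = 1/4 - 2*s*a/3 + a^2 := by
      rw [hT1]; linear_combination (a^2/3)*hs2
    linear_combination e - key
  have h8 : (T1 - T2)^2 = (4*a^2/3)/((1/2 - s*a)^2) := by
    rw [eq_div_iff (pow_ne_zero 2 hden.ne')]
    linear_combination ((1/2 - s*a)*(T1 - T2) - 2*s*a/3) * h7 + (4*a^2/9)*hs2
  have e5 : T2^3/3 + (1*(T1^3 - T2^3)/3 + (s*a - 1/2)*(T1^2 - T2^2)/2 + (a^2 + 1/4)*(T1 - T2))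
      = T1^3/3 - (1/2 - s*a)*(T1 - T2)^2/2 := by
    linear_combination (T2 - T1)*key
  have e6 : 1*((1:ℝ)^3 - T1^3)/3 + (-2)*((1:ℝ)^2 - T1^2)/2 + 1*(1 - T1) = (1 - T1)^3/3 := by
    ring
  have e8 : T1^3/3 + (1 - T1)^3/3 = (1/4 + a^2)/3 := by
    rw [hT1]; linear_combination (a^2/9)*hs2
  have hw : (1/2 - s*a)*(T1 - T2)^2/2 = (4*a^2/3)/(1 - 2*s*a) := by
    rw [eq_div_iff hden2.ne']
    linear_combination ((1/2 - s*a)*(T1 - T2) - 2*s*a/3)*h7 + (4*a^2/9)*hs2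
  linear_combination e5 + e6 + e8 - hw

set_option maxHeartbeats 2000000 in
lemma D_formula (a : ℝ) (ha1 : -(Real.sqrt 3 / 2) < a) (ha2 : a < 0) :
    D a = 1/12 + a^2/6 - 2*a^2/(3*(1 - 2*Real.sqrt 3*a)) := by
  have hs0 : (0:ℝ) < Real.sqrt 3 := Real.sqrt_pos.mpr (by norm_num)
  have hs2 : (Real.sqrt 3)^2 = 3 := Real.sq_sqrt (by norm_num)
  have hs1 : 1 < Real.sqrt 3 := by nlinarith
  have hden2 : 0 < 1 - 2*Real.sqrt 3*a := by nlinarith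
  have himg : ∀ x : ℝ × ℝ,
      ((fun p => sqDist x p) ''
        ({(-(Real.sqrt 3 / 2), 0), (Real.sqrt 3 / 2, 0), (0, 1 / 2), (a, 0)} : Set (ℝ × ℝ)))
      = {sqDist x (-(Real.sqrt 3 / 2), 0), sqDist x (Real.sqrt 3 / 2, 0),
          sqDist x (0, 1 / 2), sqDist x (a, 0)} := fun x => by
    simp only [Set.image_insert_eq, Set.image_singleton]
  have hGIc : (∫ t in (0 : ℝ)..1,
        sInf ((fun p => sqDist (-(Real.sqrt 3 * t) / 2, (1 - t) / 2) p) ''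
          ({(-(Real.sqrt 3 / 2), 0), (Real.sqrt 3 / 2, 0), (0, 1 / 2), (a, 0)} : Set (ℝ × ℝ))))
      = ∫ t in (0 : ℝ)..1, mGI (Real.sqrt 3) a t := by
    apply intervalIntegral.integral_congr
    intro t _
    beta_reduce
    rw [himg, sInf4]
    have eG : sqDist (-(Real.sqrt 3 * t) / 2, (1 - t) / 2) (-(Real.sqrt 3 / 2), 0)
        = (1-t)^2 := by
      simp only [sqDist]
      linear_combination ((1-t)^2/4)*hs2
    have eH : sqDist (-(Real.sqrt 3 * t) / 2, (1 - t) / 2) (Real.sqrt 3 / 2, 0)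
        = t^2 + t + 1 := by
      simp only [sqDist]
      linear_combination ((t+1)^2/4)*hs2
    have eI : sqDist (-(Real.sqrt 3 * t) / 2, (1 - t) / 2) (0, 1 / 2) = t^2 := by
      simp only [sqDist]
      linear_combination (t^2/4)*hs2
    have eA : sqDist (-(Real.sqrt 3 * t) / 2, (1 - t) / 2) (a, 0)
        = t^2 + (Real.sqrt 3*a - 1/2)*t + (a^2 + 1/4) := by
      simp only [sqDist]
      linear_combination (t^2/4)*hs2
    rw [eG, eH, eI, eA]
    rfl
  have hHIc : (∫ t in (0 : ℝ)..1,
        sInf ((fun p => sqDist (Real.sqrt 3 * (1 - t) / 2, t / 2) p) ''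
          ({(-(Real.sqrt 3 / 2), 0), (Real.sqrt 3 / 2, 0), (0, 1 / 2), (a, 0)} : Set (ℝ × ℝ))))
      = ∫ t in (0 : ℝ)..1, mHI (Real.sqrt 3) a t := by
    apply intervalIntegral.integral_congr
    intro t _
    beta_reduce
    rw [himg, sInf4]
    have fG : sqDist (Real.sqrt 3 * (1 - t) / 2, t / 2) (-(Real.sqrt 3 / 2), 0)
        = t^2 - 3*t + 3 := by
      simp only [sqDist]
      linear_combination ((2-t)^2/4)*hs2
    have fH : sqDist (Real.sqrt 3 * (1 - t) / 2, t / 2) (Real.sqrt 3 / 2, 0) = t^2 := by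
      simp only [sqDist]
      linear_combination (t^2/4)*hs2
    have fI : sqDist (Real.sqrt 3 * (1 - t) / 2, t / 2) (0, 1 / 2) = (1-t)^2 := by
      simp only [sqDist]
      linear_combination ((1-t)^2/4)*hs2
    have fA : sqDist (Real.sqrt 3 * (1 - t) / 2, t / 2) (a, 0)
        = t^2 - (3/2)*t + 3/4 - Real.sqrt 3*a + Real.sqrt 3*a*t + a^2 := by
      simp only [sqDist]
      linear_combination ((1-t)^2/4)*hs2
    rw [fG, fH, fI, fA]
    rfl
  unfold D
  rw [hGIc, hHIc, hGI_val (Real.sqrt 3) a hs2 hs0 ha1 ha2, hHI_val (Real.sqrt 3) a hs0 ha2]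
  field_simp
  ring

/-- Among sets `{G, H, I, (a, 0)}` with `−√3/2 < a < −1/(2√3)`, the distortion error for the
uniform measure on `GI ∪ HI` is minimized at `a = −1/2`, with minimum value `(5 − 2√3)/24`. -/
theorem optimal_four_point_Q :
    (∀ a : ℝ, -(Real.sqrt 3 / 2) < a → a < -(1 / (2 * Real.sqrt 3)) → D (-(1 / 2)) ≤ D a) ∧
      D (-(1 / 2)) = (5 - 2 * Real.sqrt 3) / 24 := by
  have hs0 : (0:ℝ) < Real.sqrt 3 := Real.sqrt_pos.mpr (by norm_num)
  have hs2 : (Real.sqrt 3)^2 = 3 := Real.sq_sqrt (by norm_num)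
  have hs1 : 1 < Real.sqrt 3 := by nlinarith
  have hslt2 : Real.sqrt 3 < 2 := by nlinarith
  have hhalf : -(Real.sqrt 3 / 2) < -(1/2 : ℝ) := by linarith
  have hsp : (0:ℝ) < 1 + Real.sqrt 3 := by linarith
  have Dhalf : D (-(1/2)) = (5 - 2 * Real.sqrt 3) / 24 := by
    rw [D_formula (-(1/2)) hhalf (by norm_num)]
    have h : 1 - 2*Real.sqrt 3*(-(1/2)) = 1 + Real.sqrt 3 := by ring
    rw [h]
    field_simp
    ring_nf
    nlinarith [hs2]
  refine ⟨?_, Dhalf⟩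
  intro a ha1 ha2
  have ha2' : a < 0 := by
    have h : (0:ℝ) < 1 / (2 * Real.sqrt 3) := by positivity
    linarith
  have hden2 : 0 < 1 - 2*Real.sqrt 3*a := by nlinarith
  rw [Dhalf, D_formula a ha1 ha2', ← sub_nonneg]
  have key : 1/12 + a^2/6 - 2*a^2/(3*(1 - 2*Real.sqrt 3*a)) - (5 - 2*Real.sqrt 3)/24
      = Real.sqrt 3*(2*a+1)^2*(2 - Real.sqrt 3 - 2*a)/(24*(1 - 2*Real.sqrt 3*a)) := by
    rw [eq_div_iff (by positivity)]
    have hinv : (3*(1 - 2*Real.sqrt 3*a)) * (3*(1 - 2*Real.sqrt 3*a))⁻¹ = 1 :=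
      mul_inv_cancel₀ (by positivity)
    linear_combination (4*a^2+1)*hs2 - 16*a^2*hinv
  rw [key]
  apply div_nonneg
  · exact mul_nonneg (mul_nonneg hs0.le (sq_nonneg _)) (by nlinarith)
  · linarith

end
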